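/- arXiv:2404.01310 — 3 statements merged into one kernel-verified Lean document; each statement's English description precedes it below -/
import Mathlib

section
/- Let $(X,d)$ and $(Y,\rho)$ be metric spaces, $s>0$, and let $f\colon X\to Y$ be Lipschitz with constant $L>0$. Let $V\subset X$ be a Borel set and let $x\in V$ satisfy $\Theta^{*,s}(X\setminus V, x)=0$. Suppose there exists $0<\lambda_x\le 1$ with $\limsup_{r\to 0} \mathcal{H}^s\big(B(f(x),\lambda_x r)\setminus f(B(x,r))\big)/(2\lambda_x r)^s < \tfrac12\,\Theta^s_*(Y,f(x))$. Then also $\limsup_{r\to 0} \mathcal{H}^s\big(B(f(x),\lambda_x r)\setminus f(V\cap B(x,r))\big)/(2\lambda_x r)^s < \tfrac12\,\Theta^s_*(Y,f(x))$. -/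
open MeasureTheory Metric Filter Set
open scoped ENNReal Topology NNReal

/-- If `f` is `L`-Lipschitz, `V` is Borel, `x ∈ V` has zero upper `s`-density of `X \ V`,
and the David-type limsup inequality holds for `f` on balls of `X`, then it also holds
with `f(B(x,r))` replaced by `f(V ∩ B(x,r))`. -/
theorem david_condition_restrict
    {X Y : Type*} [MetricSpace X] [MeasurableSpace X] [BorelSpace X]
    [MetricSpace Y] [MeasurableSpace Y] [BorelSpace Y]
    {s : ℝ} (hs : 0 < s) (f : X → Y) {L : ℝ≥0} (hL : 0 < L) (hf : LipschitzWith L f)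
    (V : Set X) (hV : MeasurableSet V) (x : X) (hxV : x ∈ V)
    (hdensV : Filter.limsup (fun r : ℝ =>
        μH[s] (closedBall x r ∩ (Set.univ \ V)) / ENNReal.ofReal ((2 * r) ^ s))
        (𝓝[>] (0 : ℝ)) = 0)
    {lx : ℝ} (hlx0 : 0 < lx) (hlx1 : lx ≤ 1)
    (hmain : Filter.limsup (fun r : ℝ =>
        μH[s] (closedBall (f x) (lx * r) \ f '' closedBall x r)
          / ENNReal.ofReal ((2 * lx * r) ^ s)) (𝓝[>] (0 : ℝ))
      < (1 / 2) * Filter.liminf (fun r : ℝ =>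
          μH[s] (closedBall (f x) r) / ENNReal.ofReal ((2 * r) ^ s)) (𝓝[>] (0 : ℝ))) :
    Filter.limsup (fun r : ℝ =>
        μH[s] (closedBall (f x) (lx * r) \ f '' (V ∩ closedBall x r))
          / ENNReal.ofReal ((2 * lx * r) ^ s)) (𝓝[>] (0 : ℝ))
      < (1 / 2) * Filter.liminf (fun r : ℝ =>
          μH[s] (closedBall (f x) r) / ENNReal.ofReal ((2 * r) ^ s)) (𝓝[>] (0 : ℝ)) := by
  set l : Filter ℝ := 𝓝[>] (0 : ℝ) with hl_def
  set mainF : ℝ → ℝ≥0∞ := fun r =>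
    μH[s] (closedBall (f x) (lx * r) \ f '' closedBall x r) / ENNReal.ofReal ((2 * lx * r) ^ s)
    with hmainF_def
  set g : ℝ → ℝ≥0∞ := fun r =>
    μH[s] (closedBall x r ∩ (Set.univ \ V)) / ENNReal.ofReal ((2 * r) ^ s) with hg_def
  set F : ℝ → ℝ≥0∞ := fun r =>
    μH[s] (closedBall (f x) (lx * r) \ f '' (V ∩ closedBall x r))
      / ENNReal.ofReal ((2 * lx * r) ^ s) with hF_def
  set R : ℝ≥0∞ := (1 / 2) * Filter.liminf (fun r : ℝ =>
      μH[s] (closedBall (f x) r) / ENNReal.ofReal ((2 * r) ^ s)) l with hR_def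
  -- constants
  set a : ℝ≥0∞ := ENNReal.ofReal (lx ^ s) with ha_def
  have ha0 : a ≠ 0 := by
    simp only [ha_def, ne_eq, ENNReal.ofReal_eq_zero, not_le]
    positivity
  have haT : a ≠ ∞ := ENNReal.ofReal_ne_top
  set C : ℝ≥0∞ := ((L : ℝ≥0∞) ^ s) / a with hC_def
  have hCT : C ≠ ∞ :=
    (ENNReal.div_lt_top (ENNReal.rpow_ne_top_of_nonneg hs.le ENNReal.coe_ne_top) ha0).ne
  -- pointwise bound, eventually
  have hptwise : ∀ᶠ r in l, F r ≤ mainF r + C * g r := by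
    filter_upwards [self_mem_nhdsWithin] with r (hr : 0 < r)
    have hsub : closedBall (f x) (lx * r) \ f '' (V ∩ closedBall x r) ⊆
        (closedBall (f x) (lx * r) \ f '' closedBall x r) ∪
          f '' (closedBall x r ∩ (Set.univ \ V)) := by
      intro y hy
      by_cases hyB : y ∈ f '' closedBall x r
      · right
        obtain ⟨z, hz, rfl⟩ := hyB
        exact ⟨z, ⟨hz, trivial, fun hzV => hy.2 ⟨z, ⟨hzV, hz⟩, rfl⟩⟩, rfl⟩
      · exact Or.inl ⟨hy.1, hyB⟩
    have hmeas : μH[s] (closedBall (f x) (lx * r) \ f '' (V ∩ closedBall x r)) ≤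
        μH[s] (closedBall (f x) (lx * r) \ f '' closedBall x r) +
          (L : ℝ≥0∞) ^ s * μH[s] (closedBall x r ∩ (Set.univ \ V)) := by
      calc _ ≤ μH[s] ((closedBall (f x) (lx * r) \ f '' closedBall x r) ∪
              f '' (closedBall x r ∩ (Set.univ \ V))) := measure_mono hsub
        _ ≤ μH[s] (closedBall (f x) (lx * r) \ f '' closedBall x r) +
              μH[s] (f '' (closedBall x r ∩ (Set.univ \ V))) := measure_union_le _ _
        _ ≤ _ := by
              gcongr
              exact hf.hausdorffMeasure_image_le hs.le _
    have hD : ENNReal.ofReal ((2 * lx * r) ^ s) = a * ENNReal.ofReal ((2 * r) ^ s) := by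
      rw [ha_def, ← ENNReal.ofReal_mul (by positivity),
        show (2 : ℝ) * lx * r = lx * (2 * r) by ring,
        Real.mul_rpow hlx0.le (by positivity)]
    have hdiv : ((L : ℝ≥0∞) ^ s * μH[s] (closedBall x r ∩ (Set.univ \ V)))
          / (a * ENNReal.ofReal ((2 * r) ^ s))
        = ((L : ℝ≥0∞) ^ s / a) *
            (μH[s] (closedBall x r ∩ (Set.univ \ V)) / ENNReal.ofReal ((2 * r) ^ s)) := by
      rw [div_eq_mul_inv, div_eq_mul_inv, div_eq_mul_inv,
        ENNReal.mul_inv (Or.inl ha0) (Or.inl haT), mul_mul_mul_comm]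
    calc F r ≤ (μH[s] (closedBall (f x) (lx * r) \ f '' closedBall x r) +
            (L : ℝ≥0∞) ^ s * μH[s] (closedBall x r ∩ (Set.univ \ V)))
            / ENNReal.ofReal ((2 * lx * r) ^ s) := by
          exact ENNReal.div_le_div_right hmeas _
      _ = mainF r + C * g r := by
          rw [hD, ENNReal.add_div]
          congr 1
          simp only [hmainF_def]
          rw [hD]
  -- conclude via limsup arithmetic
  obtain ⟨c, hAc, hcR⟩ := exists_between hmain
  obtain ⟨c', hcc', hc'R⟩ := exists_between hcR
  have hev1 : ∀ᶠ r in l, mainF r < c := eventually_lt_of_limsup_lt hAc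
  have hev2 : ∀ᶠ r in l, C * g r ≤ c' - c := by
    have hpos : (0 : ℝ≥0∞) < (c' - c) / C := by
      apply ENNReal.div_pos (by simp [tsub_eq_zero_iff_le, not_le.mpr hcc']) hCT
    have : ∀ᶠ r in l, g r < (c' - c) / C :=
      eventually_lt_of_limsup_lt (by rw [hdensV]; exact hpos)
    filter_upwards [this] with r hr
    calc C * g r ≤ C * ((c' - c) / C) := by exact mul_le_mul_right hr.le C
      _ ≤ c' - c := ENNReal.mul_div_le
  have hevF : ∀ᶠ r in l, F r ≤ c' := by
    filter_upwards [hptwise, hev1, hev2] with r h1 h2 h3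
    calc F r ≤ mainF r + C * g r := h1
      _ ≤ c + (c' - c) := add_le_add h2.le h3
      _ = c' := add_tsub_cancel_of_le hcc'.le
  calc Filter.limsup F l ≤ c' := limsup_le_of_le (by isBoundedDefault) hevF
    _ < R := hc'R
end

section
/- Let $(X,d)$ and $(Y,\rho)$ be metric spaces, $s>0$, let $f\colon X\to Y$ be Lipschitz, and let $V\subset X$ be a Borel set such that for $\mathcal{H}^s$-almost every $x\in V$ there exists $0<\lambda_x\le 1$ with $\limsup_{r\to 0} \mathcal{H}^s\big(B(f(x),\lambda_x r)\setminus f(V\cap B(x,r))\big)/(2\lambda_x r)^s < \tfrac12\,\Theta^s_*(Y,f(x))$. If $\mathcal{H}^s(V)>0$, then $\mathcal{H}^s(f(V))>0$. -/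
open MeasureTheory Metric Filter Set
open scoped ENNReal Topology NNReal

/-!
If `f '' V` were `μH[s]`-null, removing `f '' (V ∩ closedBall x r)` from a ball around `f x`
would not change its measure, so the limsup in the hypothesis would be the upper `s`-density of
`Y` at `f x` (the rescaling by `lx` does not affect a limsup at `0⁺`). That is at least the lower
density, hence at least half of it, contradicting the hypothesis at every point of `V` where it
holds. So `V` itself would be null.
-/

theorem map_mulLeft_nhdsGT_zero {𝕜 : Type*} [Field 𝕜] [LinearOrder 𝕜] [IsStrictOrderedRing 𝕜]
    [TopologicalSpace 𝕜] [OrderTopology 𝕜] {c : 𝕜} (hc : 0 < c) :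
    map (c * ·) (𝓝[>] 0) = 𝓝[>] 0 := by
  conv_lhs => rw [← comap_mulLeft_nhdsGT_zero hc]
  exact map_comap_of_surjective (mul_left_surjective₀ hc.ne') _

theorem limsup_comp_mulLeft_nhdsGT_zero {α : Type*} [ConditionallyCompleteLattice α]
    (u : ℝ → α) {c : ℝ} (hc : 0 < c) :
    limsup (fun r => u (c * r)) (𝓝[>] 0) = limsup u (𝓝[>] 0) :=
  congrArg (limsup u) (map_mulLeft_nhdsGT_zero hc)

theorem liminf_density_le_limsup_density_diff_of_image_null {X Y : Type*}
    [PseudoMetricSpace X] [PseudoMetricSpace Y] [MeasurableSpace Y] (μ : Measure Y) (s : ℝ)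
    {f : X → Y} {V : Set X} (hnull : μ (f '' V) = 0) (x : X) {c : ℝ} (hc : 0 < c) :
    liminf (fun r => μ (closedBall (f x) r) / ENNReal.ofReal ((2 * r) ^ s)) (𝓝[>] 0) ≤
      limsup (fun r => μ (closedBall (f x) (c * r) \ f '' (V ∩ closedBall x r))
        / ENNReal.ofReal ((2 * c * r) ^ s)) (𝓝[>] 0) := by
  have hdiff : (fun r => μ (closedBall (f x) (c * r) \ f '' (V ∩ closedBall x r))
      / ENNReal.ofReal ((2 * c * r) ^ s)) =
      fun r => μ (closedBall (f x) (c * r)) / ENNReal.ofReal ((2 * (c * r)) ^ s) := by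
    funext r
    rw [measure_sdiff_null (measure_mono_null (image_mono inter_subset_left) hnull), mul_assoc]
  rw [hdiff, limsup_comp_mulLeft_nhdsGT_zero
    (fun r => μ (closedBall (f x) r) / ENNReal.ofReal ((2 * r) ^ s)) hc]
  exact liminf_le_limsup

theorem image_pos_measure_of_david_general
    {X Y : Type*} [MetricSpace X] [MeasurableSpace X] [BorelSpace X]
    [MetricSpace Y] [MeasurableSpace Y] [BorelSpace Y]
    {s : ℝ} (f : X → Y)
    (V : Set X)
    (hdens : ∀ᵐ x ∂(μH[s] : Measure X), x ∈ V → ∃ lx : ℝ, 0 < lx ∧ lx ≤ 1 ∧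
      Filter.limsup (fun r : ℝ =>
          μH[s] (closedBall (f x) (lx * r) \ f '' (V ∩ closedBall x r))
            / ENNReal.ofReal ((2 * lx * r) ^ s)) (𝓝[>] (0 : ℝ))
        < (1 / 2) * Filter.liminf (fun r : ℝ =>
            μH[s] (closedBall (f x) r) / ENNReal.ofReal ((2 * r) ^ s)) (𝓝[>] (0 : ℝ)))
    (hpos : 0 < μH[s] V) :
    0 < μH[s] (f '' V) := by
  refine pos_iff_ne_zero.2 fun hnull => hpos.ne' (measure_eq_zero_iff_ae_notMem.2 ?_)
  filter_upwards [hdens] with x hx hxV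
  obtain ⟨lx, hlx, -, hlt⟩ := hx hxV
  exact (hlt.trans_le ((mul_le_of_le_one_left zero_le (by norm_num)).trans
    (liminf_density_le_limsup_density_diff_of_image_null μH[s] s hnull x hlx))).false

/-- If `f` is Lipschitz and a.e. point of the Borel set `V` satisfies the David-type
limsup inequality relative to `V`, then `μH[s] V > 0` implies `μH[s] (f '' V) > 0`. -/
theorem image_pos_measure_of_david
    {X Y : Type*} [MetricSpace X] [MeasurableSpace X] [BorelSpace X]
    [MetricSpace Y] [MeasurableSpace Y] [BorelSpace Y]
    {s : ℝ} (hs : 0 < s) (f : X → Y)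
    (hlip : ∃ L : ℝ≥0, LipschitzWith L f)
    (V : Set X) (hV : MeasurableSet V)
    (hdens : ∀ᵐ x ∂(μH[s] : Measure X), x ∈ V → ∃ lx : ℝ, 0 < lx ∧ lx ≤ 1 ∧
      Filter.limsup (fun r : ℝ =>
          μH[s] (closedBall (f x) (lx * r) \ f '' (V ∩ closedBall x r))
            / ENNReal.ofReal ((2 * lx * r) ^ s)) (𝓝[>] (0 : ℝ))
        < (1 / 2) * Filter.liminf (fun r : ℝ =>
            μH[s] (closedBall (f x) r) / ENNReal.ofReal ((2 * r) ^ s)) (𝓝[>] (0 : ℝ)))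
    (hpos : 0 < μH[s] V) :
    0 < μH[s] (f '' V) :=
  image_pos_measure_of_david_general f V hdens hpos
end

section
/- Let $(X,d)$ and $(Y,\rho)$ be complete metric spaces, $s>0$, let $f\colon X\to Y$ be Lipschitz with $\mathcal{H}^s(X)<\infty$, and suppose that for every Borel set $W\subset X$ with $\mathcal{H}^s(W)>0$ one has $\mathcal{H}^s(f(W))>0$. Then for every Borel set $V_1\subset X$ and $\mathcal{H}^s$-almost every $x\in V_1$, the set $\{x'\in V_1 : f(x')=f(x)\}$ is finite. -/
/-!
Eilenberg-type counting argument. Partition `X` into countably many Borel pieces of diameter at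
most `1/k` and let `N_k y` count the pieces whose image contains `y`. Since `f` is `L`-Lipschitz,
`∫⁻ N_k ≤ L ^ s * μH[s] X`, so by Fatou `liminf N_k < ∞` for `μH[s]`-a.e. `y`; but `N_k y → ∞`
when `f ⁻¹' {y}` is infinite. Thus the `y` with infinite fibre form a null set, and by the
positivity hypothesis its preimage is null in `X`.
-/

open MeasureTheory Metric Filter Set Function
open scoped ENNReal Topology NNReal

section Partition

variable {X : Type*} [EMetricSpace X] [MeasurableSpace X] [BorelSpace X] {s : ℝ}

lemma exists_iUnion_eq_univ_ediam_le (hfin : μH[s] (univ : Set X) ≠ ∞) {δ : ℝ≥0∞}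
    (hδ : 0 < δ) : ∃ t : ℕ → Set X, ⋃ n, t n = univ ∧ ∀ n, ediam (t n) ≤ δ := by
  by_contra! h
  refine hfin (eq_top_iff.2 ?_)
  rw [Measure.hausdorffMeasure_apply]
  refine le_iSup₂_of_le δ hδ (le_iInf fun t => le_iInf fun ht => le_iInf fun hdiam => ?_)
  obtain ⟨n, hn⟩ := h t (univ_subset_iff.1 ht)
  exact absurd (hdiam n) hn.not_ge

lemma exists_measurable_partition_ediam_le (hfin : μH[s] (univ : Set X) ≠ ∞) {δ : ℝ≥0∞}
    (hδ : 0 < δ) :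
    ∃ E : ℕ → Set X, (∀ n, MeasurableSet (E n)) ∧ Pairwise (Disjoint on E) ∧
      ⋃ n, E n = univ ∧ ∀ n, ediam (E n) ≤ δ := by
  obtain ⟨t, ht, hdiam⟩ := exists_iUnion_eq_univ_ediam_le hfin hδ
  refine ⟨disjointed (closure ∘ t), .disjointed fun n => isClosed_closure.measurableSet,
    disjoint_disjointed _, ?_, fun n => ?_⟩
  · rw [iUnion_disjointed]
    exact eq_univ_of_univ_subset (ht ▸ iUnion_mono fun n => subset_closure)
  · exact (ediam_mono (disjointed_subset _ n)).trans ((ediam_closure _).trans_le (hdiam n))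

end Partition

section Multiplicity

variable {X Y : Type*} [MeasurableSpace Y] (μ : Measure Y) (f : X → Y) (E : ℕ → Set X)

/-- The images `f '' E n` need not be measurable, so they are replaced by measurable hulls. -/
noncomputable def imageMultiplicity (y : Y) : ℝ≥0∞ :=
  ∑' n, (toMeasurable μ (f '' E n)).indicator 1 y

lemma measurable_imageMultiplicity : Measurable (imageMultiplicity μ f E) :=
  .tsum fun _ => measurable_one.indicator (measurableSet_toMeasurable _ _)

lemma card_le_imageMultiplicity [EMetricSpace X] (hcover : ⋃ n, E n = univ) {δ : ℝ≥0∞}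
    (hdiam : ∀ n, ediam (E n) ≤ δ) {y : Y} {T : Finset X} (hT : ↑T ⊆ f ⁻¹' {y})
    (hsep : δ < (T : Set X).einfsep) : (T.card : ℝ≥0∞) ≤ imageMultiplicity μ f E y := by
  classical
  have hmem (x : X) : ∃ n, x ∈ E n := mem_iUnion.1 (hcover.symm ▸ mem_univ x)
  choose ι hι using hmem
  have hinj : InjOn ι T := by
    intro a ha b hb hab
    by_contra hne
    have hab' : edist a b ≤ δ := (edist_le_ediam_of_mem (hι a) (hab ▸ hι b)).trans (hdiam _)
    exact (hsep.trans_le (Set.einfsep_le_edist_of_mem ha hb hne)).not_ge hab'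
  have hone : ∀ n ∈ T.image ι, (toMeasurable μ (f '' E n)).indicator (1 : Y → ℝ≥0∞) y = 1 := by
    simp only [Finset.mem_image]
    rintro _ ⟨x, hx, rfl⟩
    exact indicator_of_mem (subset_toMeasurable μ (f '' E (ι x)) ⟨x, hι x, hT hx⟩) _
  calc (T.card : ℝ≥0∞) = ∑ n ∈ T.image ι, (toMeasurable μ (f '' E n)).indicator 1 y := by
        rw [Finset.sum_congr rfl hone, Finset.sum_const, Finset.card_image_of_injOn hinj,
          nsmul_one]
    _ ≤ imageMultiplicity μ f E y := ENNReal.sum_le_tsum _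

lemma lintegral_imageMultiplicity_le [EMetricSpace X] [MeasurableSpace X] [BorelSpace X]
    [EMetricSpace Y] [BorelSpace Y] {s : ℝ} (hs : 0 ≤ s) {L : ℝ≥0} (hf : LipschitzWith L f)
    (hmeas : ∀ n, MeasurableSet (E n)) (hdisj : Pairwise (Disjoint on E)) :
    ∫⁻ y, imageMultiplicity μH[s] f E y ∂μH[s] ≤ (L : ℝ≥0∞) ^ s * μH[s] (univ : Set X) :=
  calc ∫⁻ y, imageMultiplicity μH[s] f E y ∂μH[s]
      = ∑' n, μH[s] (toMeasurable μH[s] (f '' E n)) := by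
        unfold imageMultiplicity
        rw [lintegral_tsum fun n =>
          (measurable_one.indicator (measurableSet_toMeasurable _ _)).aemeasurable]
        exact tsum_congr fun n => lintegral_indicator_one (measurableSet_toMeasurable _ _)
    _ ≤ ∑' n, (L : ℝ≥0∞) ^ s * μH[s] (E n) := ENNReal.tsum_le_tsum fun n => by
        rw [measure_toMeasurable]; exact hf.hausdorffMeasure_image_le hs _
    _ = (L : ℝ≥0∞) ^ s * μH[s] (⋃ n, E n) := by
        rw [ENNReal.tsum_mul_left, measure_iUnion hdisj hmeas]
    _ ≤ (L : ℝ≥0∞) ^ s * μH[s] (univ : Set X) := by gcongr; exact subset_univ _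

end Multiplicity

lemma hausdorffMeasure_setOf_infinite_fibre_eq_zero {X Y : Type*} [EMetricSpace X]
    [MeasurableSpace X] [BorelSpace X] [EMetricSpace Y] [MeasurableSpace Y] [BorelSpace Y]
    {s : ℝ} (hs : 0 ≤ s) {f : X → Y} {L : ℝ≥0} (hf : LipschitzWith L f)
    (hfin : μH[s] (univ : Set X) ≠ ∞) : μH[s] {y | (f ⁻¹' {y}).Infinite} = 0 := by
  have hδ (k : ℕ) : 0 < (k : ℝ≥0∞)⁻¹ := ENNReal.inv_pos.2 (ENNReal.natCast_ne_top k)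
  choose E hmeas hdisj hcover hdiam using fun k => exists_measurable_partition_ediam_le hfin (hδ k)
  set N := fun k => imageMultiplicity μH[s] f (E k)
  have hint : ∫⁻ y, liminf (fun k => N k y) atTop ∂μH[s] ≠ ∞ := by
    refine ne_top_of_le_ne_top ?_ (lintegral_liminf_le fun k => measurable_imageMultiplicity _ _ _)
    refine ne_top_of_le_ne_top ?_ (liminf_le_of_frequently_le' (.of_forall fun k =>
      lintegral_imageMultiplicity_le f (E k) hs hf (hmeas k) (hdisj k)))
    exact ENNReal.mul_ne_top (ENNReal.rpow_ne_top_of_nonneg hs ENNReal.coe_ne_top) hfin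
  have hinfinite (y : Y) (hy : (f ⁻¹' {y}).Infinite) : liminf (fun k => N k y) atTop = ∞ := by
    refine ENNReal.eq_top_of_forall_nnreal_le fun r => ?_
    obtain ⟨m, hm⟩ := ENNReal.exists_nat_gt (ENNReal.coe_ne_top (r := r))
    obtain ⟨T, hT, rfl⟩ := hy.exists_subset_card_eq m
    have hfine : ∀ᶠ k : ℕ in atTop, (k : ℝ≥0∞)⁻¹ < (T : Set X).einfsep :=
      ENNReal.tendsto_inv_nat_nhds_zero.eventually (Iio_mem_nhds T.finite_toSet.einfsep_pos)
    refine hm.le.trans (le_liminf_of_le (h := hfine.mono fun k hk => ?_))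
    exact card_le_imageMultiplicity _ f (E k) (hcover k) (hdiam k) hT hk
  exact measure_mono_null (fun y hy => not_lt.2 (hinfinite y hy).ge)
    (ae_iff.1 (ae_lt_top (.liminf fun k => measurable_imageMultiplicity _ _ _) hint))

lemma MeasureTheory.measure_preimage_eq_zero_of_image_pos {X Y : Type*}
    [MeasurableSpace X] [MeasurableSpace Y] {μ : Measure X} {ν : Measure Y} {f : X → Y}
    (hf : Measurable f) (hpos : ∀ W : Set X, MeasurableSet W → 0 < μ W → 0 < ν (f '' W))
    {Z : Set Y} (hZ : ν Z = 0) : μ (f ⁻¹' Z) = 0 := by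
  by_contra h
  have hW := hpos _ (hf (measurableSet_toMeasurable ν Z)) <|
    pos_iff_ne_zero.2 fun h' => h (measure_mono_null (preimage_mono (subset_toMeasurable ν Z)) h')
  refine hW.ne' (measure_mono_null ?_ ((measure_toMeasurable Z).trans hZ))
  exact image_preimage_subset _ _

theorem ae_finite_fibres_general
    {X Y : Type*} [MetricSpace X] [MeasurableSpace X] [BorelSpace X]
    [MetricSpace Y] [MeasurableSpace Y] [BorelSpace Y]
    {s : ℝ} (hs : 0 < s) (f : X → Y)
    (hlip : ∃ L : ℝ≥0, LipschitzWith L f)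
    (hfin : μH[s] (Set.univ : Set X) < ∞)
    (hpos : ∀ W : Set X, MeasurableSet W → 0 < μH[s] W → 0 < μH[s] (f '' W)) :
    ∀ V₁ : Set X, MeasurableSet V₁ →
      ∀ᵐ x ∂(μH[s] : Measure X), x ∈ V₁ →
        {x' ∈ V₁ | f x' = f x}.Finite := by
  intro V₁ _
  obtain ⟨L, hL⟩ := hlip
  have hnull := measure_preimage_eq_zero_of_image_pos hL.continuous.measurable hpos
    (hausdorffMeasure_setOf_infinite_fibre_eq_zero hs.le hL hfin.ne)
  filter_upwards [measure_eq_zero_iff_ae_notMem.1 hnull] with x hx _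
  exact (Set.not_infinite.1 hx).subset fun x' hx' => hx'.2

/-- If `f` is Lipschitz on a complete metric space with `μH[s] X < ∞` and maps Borel sets
of positive measure to sets of positive measure, then for every Borel `V₁` and
`μH[s]`-a.e. `x ∈ V₁`, the fibre `{x' ∈ V₁ : f x' = f x}` is finite. -/
theorem ae_finite_fibres
    {X Y : Type*} [MetricSpace X] [CompleteSpace X] [MeasurableSpace X] [BorelSpace X]
    [MetricSpace Y] [CompleteSpace Y] [MeasurableSpace Y] [BorelSpace Y]
    {s : ℝ} (hs : 0 < s) (f : X → Y)
    (hlip : ∃ L : ℝ≥0, LipschitzWith L f)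
    (hfin : μH[s] (Set.univ : Set X) < ∞)
    (hpos : ∀ W : Set X, MeasurableSet W → 0 < μH[s] W → 0 < μH[s] (f '' W)) :
    ∀ V₁ : Set X, MeasurableSet V₁ →
      ∀ᵐ x ∂(μH[s] : Measure X), x ∈ V₁ →
        {x' ∈ V₁ | f x' = f x}.Finite :=
  ae_finite_fibres_general hs f hlip hfin hpos
end
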